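/- Let b be a positive integer. Then for every positive integer n, t(3,5,4b;4n+3) = t(3,5,b;n). -/
import Mathlib


def tri (x : ℤ) : ℤ := x * (x + 1) / 2

noncomputable def N (a b c n : ℕ) : ℕ :=
  Nat.card {p : ℤ × ℤ × ℤ // (n : ℤ) = a * p.1 ^ 2 + b * p.2.1 ^ 2 + c * p.2.2 ^ 2}

noncomputable def t (a b c n : ℕ) : ℕ :=
  Nat.card {p : ℤ × ℤ × ℤ // (n : ℤ) = a * tri p.1 + b * tri p.2.1 + c * tri p.2.2}

noncomputable def T (a b c n : ℕ) : ℕ :=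
  Nat.card {p : ℕ × ℕ × ℕ // (n : ℤ) = a * tri p.1 + b * tri p.2.1 + c * tri p.2.2}

lemma two_mul_tri (x : ℤ) : 2 * tri x = x * (x + 1) := by
  unfold tri
  obtain ⟨k, hk⟩ := Int.even_mul_succ_self x
  omega

lemma eight_tri (x : ℤ) : 8 * tri x = (2 * x + 1) ^ 2 - 1 := by
  linear_combination 4 * two_mul_tri x

lemma keyNat : ∀ r : ℕ, r < 16 → ∀ s : ℕ, s < 16 →
    (3*(2*r+1)*(2*r+1)+5*(2*s+1)*(2*s+1)) % 32 = 0 →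
    ((r+47-3*s) % 8 = 0 ∧ (r+5*s+7) % 8 = 0 ∧ (s+91-3*r) % 8 = 0) ∨
    ((r+82-5*s) % 8 = 0 ∧ (s+3*r+6) % 8 = 0 ∧ ¬ (r+47-3*s) % 8 = 0) := by decide

lemma key (x y M : ℤ) (h : 3*(2*x+1)*(2*x+1)+5*(2*y+1)*(2*y+1) = 32*M) :
    ((8:ℤ) ∣ (x-3*y-1) ∧ (8:ℤ) ∣ (x+5*y-1) ∧ (8:ℤ) ∣ (y-3*x-5)) ∨
    (¬ (8:ℤ) ∣ (x-3*y-1) ∧ (8:ℤ) ∣ (x-5*y-6) ∧ (8:ℤ) ∣ (y+3*x-2)) := by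
  set r : ℤ := x % 16 with hr
  set s : ℤ := y % 16 with hs
  have hxr : x ≡ r [ZMOD 16] := by unfold Int.ModEq; omega
  have hys : y ≡ s [ZMOD 16] := by unfold Int.ModEq; omega
  have hu : (2*x+1) ≡ (2*r+1) [ZMOD 32] := by
    have h2 := hxr.mul_left' (c := 2)
    norm_num at h2
    exact h2.add_right 1
  have hv : (2*y+1) ≡ (2*s+1) [ZMOD 32] := by
    have h2 := hys.mul_left' (c := 2)
    norm_num at h2
    exact h2.add_right 1
  have hm : (3*(2*r+1)*(2*r+1)+5*(2*s+1)*(2*s+1)) % 32 = 0 := by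
    have hq : (3*(2*x+1)*(2*x+1)+5*(2*y+1)*(2*y+1)) ≡
        (3*(2*r+1)*(2*r+1)+5*(2*s+1)*(2*s+1)) [ZMOD 32] :=
      (((hu.mul_left 3).mul hu)).add ((hv.mul_left 5).mul hv)
    have := hq.symm
    unfold Int.ModEq at this
    omega
  have hr0 : 0 ≤ r := by omega
  have hs0 : 0 ≤ s := by omega
  obtain ⟨r', hr'⟩ := Int.eq_ofNat_of_zero_le hr0
  obtain ⟨s', hs'⟩ := Int.eq_ofNat_of_zero_le hs0
  have hr16 : r' < 16 := by omega
  have hs16 : s' < 16 := by omega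
  have hmn : (3*(2*r'+1)*(2*r'+1)+5*(2*s'+1)*(2*s'+1)) % 32 = 0 := by
    rw [hr', hs'] at hm
    exact_mod_cast hm
  have := keyNat r' hr16 s' hs16 hmn
  omega

/-- the "down" map on the first two coordinates -/
def Dp (x y : ℤ) : ℤ × ℤ :=
  if (8:ℤ) ∣ (x-3*y-1) then ((x+5*y-1)/8, (y-3*x-5)/8) else ((x-5*y-6)/8, (y+3*x-2)/8)

/-- the "up" map on the first two coordinates -/
def Gp (x y : ℤ) : ℤ × ℤ :=
  if (2:ℤ) ∣ (x+y) then ((x+5*y+2)/2, (y-3*x-2)/2) else ((x-5*y-3)/2, (3*x+y+1)/2)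

lemma hquad (b n z x y : ℤ) (h : 4*n+3 = 3*tri x + 5*tri y + 4*b*tri z) :
    3*(2*x+1)*(2*x+1)+5*(2*y+1)*(2*y+1) = 32*(n+1-b*tri z) := by
  linear_combination -8*h - 3*(eight_tri x) - 5*(eight_tri y)

lemma memG (b n z x y : ℤ) (h : n = 3*tri x + 5*tri y + b*tri z) :
    4*n+3 = 3*tri (Gp x y).1 + 5*tri (Gp x y).2 + 4*b*tri z := by
  have ex := eight_tri x
  have ey := eight_tri y
  by_cases h2 : (2:ℤ) ∣ (x+y)
  · rw [Gp, if_pos h2]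
    set X := (x+5*y+2)/2 with hXdef
    set Y := (y-3*x-2)/2 with hYdef
    have hX : 2*X = x+5*y+2 := by omega
    have hY : 2*Y = y-3*x-2 := by omega
    have e1 := eight_tri X
    have e2 := eight_tri Y
    have h8 : (8:ℤ)*(4*n+3) = 8*(3*tri X + 5*tri Y + 4*b*tri z) := by
      linear_combination 32*h - 3*e1 - 5*e2 + 12*ex + 20*ey
        - (3*(2*X+x+5*y+4))*hX - (5*(2*Y+y-3*x))*hY
    exact mul_left_cancel₀ (by norm_num) h8
  · rw [Gp, if_neg h2]
    set X := (x-5*y-3)/2 with hXdef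
    set Y := (3*x+y+1)/2 with hYdef
    have hX : 2*X = x-5*y-3 := by omega
    have hY : 2*Y = 3*x+y+1 := by omega
    have e1 := eight_tri X
    have e2 := eight_tri Y
    have h8 : (8:ℤ)*(4*n+3) = 8*(3*tri X + 5*tri Y + 4*b*tri z) := by
      linear_combination 32*h - 3*e1 - 5*e2 + 12*ex + 20*ey
        - (3*(2*X+x-5*y-1))*hX - (5*(2*Y+3*x+y+3))*hY
    exact mul_left_cancel₀ (by norm_num) h8

lemma memD (b n z x y : ℤ) (h : 4*n+3 = 3*tri x + 5*tri y + 4*b*tri z) :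
    n = 3*tri (Dp x y).1 + 5*tri (Dp x y).2 + b*tri z := by
  have ex := eight_tri x
  have ey := eight_tri y
  have hk := key x y _ (hquad b n z x y h)
  by_cases h8 : (8:ℤ) ∣ (x-3*y-1)
  · have hd1 : (8:ℤ) ∣ (x+5*y-1) := by tauto
    have hd2 : (8:ℤ) ∣ (y-3*x-5) := by tauto
    rw [Dp, if_pos h8]
    set X := (x+5*y-1)/8 with hXdef
    set Y := (y-3*x-5)/8 with hYdef
    have hX : 8*X = x+5*y-1 := by omega
    have hY : 8*Y = y-3*x-5 := by omega
    have e1 := eight_tri X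
    have e2 := eight_tri Y
    have h128 : (128:ℤ)*n = 128*(3*tri X + 5*tri Y + b*tri z) := by
      linear_combination 32*h - 48*e1 - 80*e2 + 12*ex + 20*ey
        - (3*(8*X+x+5*y+7))*hX - (5*(8*Y+y-3*x+3))*hY
    exact mul_left_cancel₀ (by norm_num) h128
  · have hd1 : (8:ℤ) ∣ (x-5*y-6) := by tauto
    have hd2 : (8:ℤ) ∣ (y+3*x-2) := by tauto
    rw [Dp, if_neg h8]
    set X := (x-5*y-6)/8 with hXdef
    set Y := (y+3*x-2)/8 with hYdef
    have hX : 8*X = x-5*y-6 := by omega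
    have hY : 8*Y = y+3*x-2 := by omega
    have e1 := eight_tri X
    have e2 := eight_tri Y
    have h128 : (128:ℤ)*n = 128*(3*tri X + 5*tri Y + b*tri z) := by
      linear_combination 32*h - 48*e1 - 80*e2 + 12*ex + 20*ey
        - (3*(8*X+x-5*y+2))*hX - (5*(8*Y+y+3*x+6))*hY
    exact mul_left_cancel₀ (by norm_num) h128

lemma DGp (x y : ℤ) : Dp (Gp x y).1 (Gp x y).2 = (x, y) := by
  by_cases h2 : (2:ℤ) ∣ (x+y)
  · rw [Gp, if_pos h2]
    rw [Dp, if_neg (by omega)]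
    simp only [Prod.mk.injEq]
    constructor <;> omega
  · rw [Gp, if_neg h2]
    rw [Dp, if_pos (by omega)]
    simp only [Prod.mk.injEq]
    constructor <;> omega

lemma GDp (x y M : ℤ) (hq : 3*(2*x+1)*(2*x+1)+5*(2*y+1)*(2*y+1) = 32*M) :
    Gp (Dp x y).1 (Dp x y).2 = (x, y) := by
  have hk := key x y M hq
  by_cases h8 : (8:ℤ) ∣ (x-3*y-1)
  · have hd1 : (8:ℤ) ∣ (x+5*y-1) := by tauto
    have hd2 : (8:ℤ) ∣ (y-3*x-5) := by tauto
    rw [Dp, if_pos h8]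
    rw [Gp, if_neg (by omega)]
    simp only [Prod.mk.injEq]
    constructor <;> omega
  · have hd1 : (8:ℤ) ∣ (x-5*y-6) := by tauto
    have hd2 : (8:ℤ) ∣ (y+3*x-2) := by tauto
    rw [Dp, if_neg h8]
    rw [Gp, if_pos (by omega)]
    simp only [Prod.mk.injEq]
    constructor <;> omega

theorem stmt18 (b : ℕ) (hb : 0 < b) (n : ℕ) (hn : 0 < n) :
    t 3 5 (4 * b) (4 * n + 3) = t 3 5 b n := by
  unfold t
  refine Nat.card_congr
    ⟨fun p => ⟨((Dp p.1.1 p.1.2.1).1, (Dp p.1.1 p.1.2.1).2, p.1.2.2), ?_⟩,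
     fun q => ⟨((Gp q.1.1 q.1.2.1).1, (Gp q.1.1 q.1.2.1).2, q.1.2.2), ?_⟩, ?_, ?_⟩
  · obtain ⟨⟨x, y, z⟩, hp⟩ := p
    push_cast at hp ⊢
    exact memD (b:ℤ) (n:ℤ) z x y (by linarith)
  · obtain ⟨⟨x, y, z⟩, hq⟩ := q
    push_cast at hq ⊢
    have := memG (b:ℤ) (n:ℤ) z x y (by linarith)
    linarith
  · rintro ⟨⟨x, y, z⟩, hp⟩
    push_cast at hp
    have hq : 3*(2*x+1)*(2*x+1)+5*(2*y+1)*(2*y+1) = 32*((n:ℤ)+1-(b:ℤ)*tri z) :=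
      hquad (b:ℤ) (n:ℤ) z x y (by linarith)
    have h1 := GDp x y _ hq
    apply Subtype.ext
    simp only [h1]
  · rintro ⟨⟨x, y, z⟩, hq⟩
    have h1 := DGp x y
    apply Subtype.ext
    simp only [h1]
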